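/- Let $g$ be a permutation of a finite set $\Omega$ whose set of fixed points has size at most $|\Omega|/2$. Then $g$ fixes setwise at most $2^{3|\Omega|/4}$ subsets of $\Omega$. -/

import Mathlib

/-!
A set fixed by `g` is fixed by every power of `g`, hence is a union of orbits of `⟨g⟩`, i.e. of
cycles of `g`; so there are at most `2 ^ c` of them, `c` the number of cycles. Every cycle that is
not a fixed point has length at least `2`, whence `2c ≤ |Ω| + |Fix g| ≤ 3|Ω|/2`.
-/

open MulAction
open scoped Pointwise

namespace MulAction

variable {G α : Type*} [Group G] [MulAction G α]

theorem preimage_image_orbitRel_mk_eq_self {S : Set α} (hS : ∀ g : G, g • S = S) :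
    (Quotient.mk (orbitRel G α)) ⁻¹' (Quotient.mk (orbitRel G α) '' S) = S := by
  refine (Set.subset_preimage_image _ S).antisymm' ?_
  rintro x ⟨y, hy, hyx⟩
  obtain ⟨g, rfl⟩ : x ∈ orbit G y := Quotient.exact hyx.symm
  exact hS g ▸ Set.smul_mem_smul_set hy

theorem card_invariant_sets_le_two_pow [Finite α] :
    Nat.card {S : Set α // ∀ g : G, g • S = S} ≤ 2 ^ Nat.card (orbitRel.Quotient G α) := by
  classical
  have := Fintype.ofFinite (orbitRel.Quotient G α)
  rw [Nat.card_eq_fintype_card (α := orbitRel.Quotient G α), ← Fintype.card_set,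
    ← Nat.card_eq_fintype_card]
  refine Nat.card_le_card_of_injective (fun S ↦ Quotient.mk _ '' S.1) fun S T hST ↦ ?_
  rw [Subtype.ext_iff, ← preimage_image_orbitRel_mk_eq_self S.2,
    ← preimage_image_orbitRel_mk_eq_self T.2]
  exact congrArg _ hST

theorem two_le_card_orbit_add_ite [Finite α] (a : α) [Decidable (a ∈ fixedPoints G α)] :
    2 ≤ Nat.card (orbit G a) + if a ∈ fixedPoints G α then 1 else 0 := by
  split_ifs with ha
  · have : Nonempty (orbit G a) := ⟨⟨a, mem_orbit_self a⟩⟩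
    have := Nat.card_pos (α := orbit G a)
    omega
  · rw [← subsingleton_orbit_iff_mem_fixedPoints, Set.not_subsingleton_iff] at ha
    rw [Nat.card_coe_set_eq]
    have := Set.one_lt_ncard_iff_nontrivial.2 ha
    omega

theorem two_mul_card_orbitRel_quotient_le [Finite α] :
    2 * Nat.card (orbitRel.Quotient G α) ≤ Nat.card α + Nat.card (fixedPoints G α) := by
  classical
  have := Fintype.ofFinite (orbitRel.Quotient G α)
  let F : Finset (orbitRel.Quotient G α) := {ω | ω.out ∈ fixedPoints G α}
  have hα : Nat.card α = ∑ ω : orbitRel.Quotient G α, Nat.card (orbit G ω.out) := by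
    rw [Nat.card_congr (selfEquivSigmaOrbits G α), Nat.card_sigma]
  have hF : F.card ≤ Nat.card (fixedPoints G α) := by
    rw [Nat.card_coe_set_eq, ← Set.ncard_coe_finset]
    exact Set.ncard_le_ncard_of_injOn Quotient.out (fun ω hω ↦ by simpa [F] using hω)
      Quotient.out_injective.injOn
  calc 2 * Nat.card (orbitRel.Quotient G α)
      = ∑ _ω : orbitRel.Quotient G α, 2 := by simp [Nat.card_eq_fintype_card, mul_comm]
    _ ≤ ∑ ω : orbitRel.Quotient G α,
          (Nat.card (orbit G ω.out) + if ω.out ∈ fixedPoints G α then 1 else 0) :=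
        Finset.sum_le_sum fun ω _ ↦ two_le_card_orbit_add_ite ω.out
    _ = Nat.card α + F.card := by rw [Finset.sum_add_distrib, Finset.sum_boole, hα]; rfl
    _ ≤ Nat.card α + Nat.card (fixedPoints G α) := by omega

end MulAction

theorem Equiv.Perm.fixedPoints_zpowers {Ω : Type*} (g : Equiv.Perm Ω) :
    fixedPoints (Subgroup.zpowers g) Ω = {x | g x = x} := by
  ext x
  rw [mem_fixedPoints, Subgroup.forall_zpowers]
  exact mem_fixedBy_zpowers_iff_mem_fixedBy (g := g) (a := x)

theorem Equiv.Perm.zpowers_smul_set_eq_of_image_eq {Ω : Type*} {g : Equiv.Perm Ω} {S : Set Ω}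
    (hS : ⇑g '' S = S) (h : Subgroup.zpowers g) : h • S = S := by
  have : g ∈ stabilizer (Equiv.Perm Ω) S := hS
  exact (Subgroup.zpowers_le.2 this) h.2

/-- A permutation of a finite set `Ω` with at most `|Ω|/2` fixed points fixes
setwise at most `2 ^ (3|Ω|/4)` subsets of `Ω`. -/
theorem stmt_4 {Ω : Type*} [Fintype Ω] (g : Equiv.Perm Ω)
    (h : 2 * Set.ncard {x : Ω | g x = x} ≤ Fintype.card Ω) :
    (Nat.card {S : Set Ω // ⇑g '' S = S} : ℝ) ≤
      2 ^ (3 * (Fintype.card Ω : ℝ) / 4) := by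
  set q := Nat.card (orbitRel.Quotient (Subgroup.zpowers g) Ω)
  have hsets : Nat.card {S : Set Ω // ⇑g '' S = S} ≤ 2 ^ q :=
    (Finite.card_le_of_embedding (Subtype.impEmbedding _ _
      fun _ ↦ Equiv.Perm.zpowers_smul_set_eq_of_image_eq)).trans card_invariant_sets_le_two_pow
  have horbits : 2 * q ≤ Fintype.card Ω + Set.ncard {x : Ω | g x = x} := by
    simpa [Equiv.Perm.fixedPoints_zpowers] using
      two_mul_card_orbitRel_quotient_le (G := Subgroup.zpowers g) (α := Ω)
  have hq : (q : ℝ) ≤ 3 * (Fintype.card Ω : ℝ) / 4 := by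
    rw [le_div_iff₀ four_pos]
    exact_mod_cast (by omega : q * 4 ≤ 3 * Fintype.card Ω)
  calc (Nat.card {S : Set Ω // ⇑g '' S = S} : ℝ)
      ≤ (2 : ℝ) ^ (q : ℝ) := by rw [Real.rpow_natCast]; exact_mod_cast hsets
    _ ≤ 2 ^ (3 * (Fintype.card Ω : ℝ) / 4) := Real.rpow_le_rpow_of_exponent_le one_le_two hq
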